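/- Let D ∈ ℝ with D ≠ 0. The vector field (x,h,z) ↦ (0, 0, e^{−Dx}) is a Killing field of the metric g_{0,D} = dx² + dh dz + D z dx dh on ℝ³. -/

import Mathlib

/-! The coefficients of `g_{0,D}` depend only on `z`, with `∂_z g = (D/2)(dx ⊗ dh + dh ⊗ dx)`,
so along `T = e^{-Dx} ∂_z` they change by `(D/2) e^{-Dx} (u₀v₁ + u₁v₀)`. Since `DT = -D e^{-Dx} dx ⊗ ∂_z`
and `g(∂_z, ·) = dh / 2`, the two terms `g(DT u, v) + g(u, DT v)` contribute exactly the opposite. -/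

open Matrix

noncomputable section

abbrev V3 : Type := Fin 3 → ℝ

/-- The matrix at `p = (x,h,z)` of the metric `g_{C,D} = dx² + dh dz + C z² dh² + D z dx dh`
in the standard basis of `ℝ³`. -/
def gCD (C D : ℝ) (p : V3) : Matrix (Fin 3) (Fin 3) ℝ :=
  !![1, D * p 2 / 2, 0;
     D * p 2 / 2, C * p 2 ^ 2, 1 / 2;
     0, 1 / 2, 0]

/-- `T` is a Killing field of the metric `g` (given by a field of matrices):
`(D_p(q ↦ g_q(u,v)))(T(p)) + g_p((D_pT)(u), v) + g_p(u, (D_pT)(v)) = 0`. -/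
def IsKillingVF (g : V3 → Matrix (Fin 3) (Fin 3) ℝ) (T : V3 → V3) : Prop :=
  ∀ p u v : V3,
    fderiv ℝ (fun q => u ⬝ᵥ (g q).mulVec v) p (T p)
      + (fderiv ℝ T p u) ⬝ᵥ (g p).mulVec v
      + u ⬝ᵥ (g p).mulVec (fderiv ℝ T p v) = 0

theorem dotProduct_gCD_mulVec (C D : ℝ) (p u v : V3) :
    u ⬝ᵥ (gCD C D p).mulVec v = u 0 * v 0 + (u 1 * v 2 + u 2 * v 1) / 2
      + D * (u 0 * v 1 + u 1 * v 0) / 2 * p 2 + C * u 1 * v 1 * p 2 ^ 2 := by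
  simp only [gCD, mulVec, dotProduct, Fin.sum_univ_three, of_apply, cons_val_zero, cons_val_one,
    cons_val_two, head_cons, tail_cons]
  ring

theorem fderiv_dotProduct_gCD_mulVec_apply (C D : ℝ) (u v p w : V3) :
    fderiv ℝ (fun q => u ⬝ᵥ (gCD C D q).mulVec v) p w
      = (D * (u 0 * v 1 + u 1 * v 0) / 2 + 2 * C * u 1 * v 1 * p 2) * w 2 := by
  set a := u 0 * v 0 + (u 1 * v 2 + u 2 * v 1) / 2
  set b := D * (u 0 * v 1 + u 1 * v 0) / 2
  set c := C * u 1 * v 1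
  have hquadratic : HasDerivAt (fun z : ℝ => a + b * z + c * z ^ 2) (b + 2 * c * p 2) (p 2) :=
    (((hasDerivAt_id' (p 2)).const_mul b).const_add a).add
      ((hasDerivAt_pow 2 (p 2)).const_mul c) |>.congr_deriv (by ring)
  have hcomp : HasFDerivAt (fun q : V3 => a + b * q 2 + c * q 2 ^ 2)
      ((b + 2 * c * p 2) • (ContinuousLinearMap.proj (2 : Fin 3) : V3 →L[ℝ] ℝ)) p :=
    (hquadratic.comp_hasFDerivAt p
      (ContinuousLinearMap.proj (R := ℝ) (φ := fun _ : Fin 3 => ℝ) 2).hasFDerivAt :)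
  have hfun : (fun q : V3 => u ⬝ᵥ (gCD C D q).mulVec v) = fun q => a + b * q 2 + c * q 2 ^ 2 := by
    funext q; exact dotProduct_gCD_mulVec C D q u v
  rw [hfun, hcomp.fderiv]
  simp only [_root_.smul_apply, ContinuousLinearMap.proj_apply, smul_eq_mul, c]
  ring

theorem fderiv_exp_field_apply (D : ℝ) (p w : V3) :
    fderiv ℝ (fun q : V3 => ![0, 0, Real.exp (-(D * q 0))]) p w
      = ![0, 0, -D * Real.exp (-(D * p 0)) * w 0] := by
  have hexp : HasFDerivAt (fun q : V3 => Real.exp (-(D * q 0)))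
      (Real.exp (-(D * p 0)) • -(D • (ContinuousLinearMap.proj (0 : Fin 3) : V3 →L[ℝ] ℝ))) p :=
    ((hasFDerivAt_apply 0 p).const_mul D).neg.exp
  have hfun : (fun q : V3 => ![0, 0, Real.exp (-(D * q 0))])
      = fun q => Real.exp (-(D * q 0)) • ![0, 0, 1] := by
    funext q; simp
  rw [hfun, (hexp.smul_const _).fderiv]
  ext i
  fin_cases i <;> simp
  ring

theorem exp_killing_field_general (D : ℝ) :
    IsKillingVF (gCD 0 D) (fun p => ![0, 0, Real.exp (-(D * p 0))]) := by
  intro p u v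
  rw [fderiv_dotProduct_gCD_mulVec_apply, fderiv_exp_field_apply, fderiv_exp_field_apply,
    dotProduct_gCD_mulVec, dotProduct_gCD_mulVec]
  simp only [cons_val_zero, cons_val_one, cons_val_two, tail_cons, head_cons]
  ring

/-- for `D ≠ 0`, the vector field `(x,h,z) ↦ (0, 0, e^{−Dx})` is a Killing
field of `g_{0,D} = dx² + dh dz + D z dx dh` on `ℝ³`. -/
theorem exp_killing_field (D : ℝ) (hD : D ≠ 0) :
    IsKillingVF (gCD 0 D) (fun p => ![0, 0, Real.exp (-(D * p 0))]) :=
  exp_killing_field_general D
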